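/- arXiv:1204.5160 — 4 statements merged into one kernel-verified Lean document; each statement's English description precedes it below -/
import Mathlib

section
/- For every unimodular complex number a, the matrix H₄(a) with rows (1,1,1,1), (1,-1,a,-a), (1,1,-1,-1), (1,-1,-a,a) is a complex Hadamard matrix of order 4. -/
open Complex Matrix BigOperators

/-- A complex Hadamard matrix: unimodular entries and `H * Hᴴ = n • 1`. -/
def IsCHadamard {n : ℕ} (H : Matrix (Fin n) (Fin n) ℂ) : Prop :=
  (∀ i j, ‖H i j‖ = 1) ∧ H * H.conjTranspose = (n : ℂ) • 1

/-- A permutation matrix. -/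
def IsPermMatrix {n : ℕ} (P : Matrix (Fin n) (Fin n) ℂ) : Prop :=
  ∃ σ : Equiv.Perm (Fin n), ∀ i j, P i j = if σ j = i then 1 else 0

/-- A diagonal matrix with unimodular diagonal entries. -/
def IsUnitaryDiag {n : ℕ} (D : Matrix (Fin n) (Fin n) ℂ) : Prop :=
  D.IsDiag ∧ ∀ i, ‖D i i‖ = 1

/-- Equivalence of complex Hadamard matrices. -/
def HadEquiv {n : ℕ} (H K : Matrix (Fin n) (Fin n) ℂ) : Prop :=
  ∃ P₁ P₂ D₁ D₂ : Matrix (Fin n) (Fin n) ℂ,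
    IsPermMatrix P₁ ∧ IsPermMatrix P₂ ∧ IsUnitaryDiag D₁ ∧ IsUnitaryDiag D₂ ∧
    P₁ * D₁ * H * D₂ * P₂ = K

/-- The Haagerup set of a matrix. -/
def HaagerupSet {n : ℕ} (H : Matrix (Fin n) (Fin n) ℂ) : Set ℂ :=
  {z | ∃ i j k l : Fin n,
    z = H i j * H k l * starRingEnd ℂ (H i l) * starRingEnd ℂ (H k j)}

def H4 (a : ℂ) : Matrix (Fin 4) (Fin 4) ℂ :=
  !![1, 1, 1, 1;
     1, -1, a, -a;
     1, 1, -1, -1;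
     1, -1, -a, a]

theorem H4_mul_conjTranspose (a : ℂ) :
    H4 a * (H4 a)ᴴ =
      !![(4 : ℂ), 0, 0, 0;
         0, 2 + 2 * normSq a, 0, 2 - 2 * normSq a;
         0, 0, 4, 0;
         0, 2 - 2 * normSq a, 0, 2 + 2 * normSq a] := by
  ext i j
  fin_cases i <;> fin_cases j <;>
    simp [H4, mul_apply, Fin.sum_univ_four, mul_conj] <;> ring

theorem norm_H4_apply {a : ℂ} (ha : ‖a‖ = 1) (i j : Fin 4) : ‖H4 a i j‖ = 1 := by
  fin_cases i <;> fin_cases j <;> simp [H4, ha]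

theorem H4_isCHadamard (a : ℂ) (ha : ‖a‖ = 1) :
    IsCHadamard (H4 a) := by
  have hnormSq : normSq a = 1 := by rw [normSq_eq_norm_sq, ha, one_pow]
  refine ⟨norm_H4_apply ha, ?_⟩
  rw [H4_mul_conjTranspose, hnormSq]
  ext i j
  fin_cases i <;> fin_cases j <;> norm_num
end

section
/- The matrices H₄(1) and H₄(i) are inequivalent complex Hadamard matrices of order 4. -/
open Complex Matrix BigOperators

/-! Equivalence permutes rows and columns and multiplies them by unimodular phases; in a
Haagerup product `h i j * h k l * conj (h i l) * conj (h k j)` each phase meets its own conjugate,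
so the Haagerup set can only shrink along an equivalence. All Haagerup products of the real
matrix `H4 1` are real, whereas `I` is a Haagerup product of `H4 I`. -/

lemma Complex.mul_conj_of_norm_eq_one {z : ℂ} (hz : ‖z‖ = 1) : z * starRingEnd ℂ z = 1 := by
  rw [Complex.mul_conj', hz]; norm_num

lemma IsPermMatrix.exists_eq_permMatrix {n : ℕ} {P : Matrix (Fin n) (Fin n) ℂ}
    (hP : IsPermMatrix P) : ∃ σ : Equiv.Perm (Fin n), P = σ.permMatrix ℂ := by
  obtain ⟨σ, hσ⟩ := hP
  refine ⟨σ.symm, Matrix.ext fun i j => ?_⟩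
  simp only [hσ, PEquiv.toMatrix_toPEquiv_apply, Pi.single_apply, Equiv.eq_symm_apply]

lemma HadEquiv.exists_apply_eq {n : ℕ} {H K : Matrix (Fin n) (Fin n) ℂ} (h : HadEquiv H K) :
    ∃ (σ τ : Equiv.Perm (Fin n)) (d e : Fin n → ℂ), (∀ i, ‖d i‖ = 1) ∧ (∀ j, ‖e j‖ = 1) ∧
      ∀ i j, K i j = d i * H (σ i) (τ j) * e j := by
  obtain ⟨P₁, P₂, D₁, D₂, hP₁, hP₂, ⟨hD₁, hd⟩, ⟨hD₂, he⟩, rfl⟩ := h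
  obtain ⟨σ, rfl⟩ := hP₁.exists_eq_permMatrix
  obtain ⟨τ, rfl⟩ := hP₂.exists_eq_permMatrix
  refine ⟨σ, τ.symm, fun i => D₁ (σ i) (σ i), fun j => D₂ (τ.symm j) (τ.symm j),
    fun i => hd _, fun j => he _, fun i j => ?_⟩
  rw [← hD₁.diagonal_diag, ← hD₂.diagonal_diag,
    show ∀ A B C D E : Matrix (Fin n) (Fin n) ℂ, A * B * C * D * E = A * (B * C * D) * E by
      intros; simp only [Matrix.mul_assoc],
    PEquiv.toMatrix_toPEquiv_mul, PEquiv.mul_toMatrix_toPEquiv]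
  simp [mul_diagonal, diagonal_mul]

lemma HadEquiv.haagerupSet_subset {n : ℕ} {H K : Matrix (Fin n) (Fin n) ℂ} (h : HadEquiv H K) :
    HaagerupSet K ⊆ HaagerupSet H := by
  obtain ⟨σ, τ, d, e, hd, he, hK⟩ := h.exists_apply_eq
  rintro _ ⟨i, j, k, l, rfl⟩
  refine ⟨σ i, τ j, σ k, τ l, ?_⟩
  simp only [hK, map_mul]
  have units : d i * starRingEnd ℂ (d i) * (d k * starRingEnd ℂ (d k)) *
      (e j * starRingEnd ℂ (e j)) * (e l * starRingEnd ℂ (e l)) = 1 := by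
    rw [Complex.mul_conj_of_norm_eq_one (hd i), Complex.mul_conj_of_norm_eq_one (hd k),
      Complex.mul_conj_of_norm_eq_one (he j), Complex.mul_conj_of_norm_eq_one (he l)]; norm_num
  linear_combination (H (σ i) (τ j) * H (σ k) (τ l) * starRingEnd ℂ (H (σ i) (τ l)) *
    starRingEnd ℂ (H (σ k) (τ j))) * units

lemma conj_eq_of_mem_haagerupSet {n : ℕ} {H : Matrix (Fin n) (Fin n) ℂ}
    (hH : ∀ i j, starRingEnd ℂ (H i j) = H i j) {z : ℂ} (hz : z ∈ HaagerupSet H) :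
    starRingEnd ℂ z = z := by
  obtain ⟨i, j, k, l, rfl⟩ := hz
  simp only [map_mul, hH]

lemma isCHadamard_H4 {a : ℂ} (ha : ‖a‖ = 1) : IsCHadamard (H4 a) := by
  have ha' := Complex.mul_conj_of_norm_eq_one ha
  refine ⟨fun i j => ?_, ?_⟩
  · fin_cases i <;> fin_cases j <;> simp [H4, ha]
  · ext i j
    fin_cases i <;> fin_cases j <;>
      simp [H4, mul_apply, Fin.sum_univ_four, one_apply, ha'] <;> norm_num

lemma mem_haagerupSet_H4 (a : ℂ) : a ∈ HaagerupSet (H4 a) :=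
  ⟨1, 2, 0, 0, by simp [H4]⟩

lemma conj_H4_one_apply (i j : Fin 4) : starRingEnd ℂ (H4 1 i j) = H4 1 i j := by
  fin_cases i <;> fin_cases j <;> simp [H4]

theorem H4_one_I_inequivalent :
    IsCHadamard (H4 1) ∧ IsCHadamard (H4 Complex.I) ∧
    ¬ HadEquiv (H4 1) (H4 Complex.I) := by
  refine ⟨isCHadamard_H4 (by simp), isCHadamard_H4 (by simp), fun h => ?_⟩
  have hI := conj_eq_of_mem_haagerupSet conj_H4_one_apply
    (h.haagerupSet_subset (mem_haagerupSet_H4 Complex.I))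
  rw [Complex.conj_I] at hI
  exact Complex.I_ne_zero (by linear_combination -hI / 2)
end

section
/- If a complex Hadamard matrix H is equivalent to some BH(q,n) matrix, then every dephased form of H has all entries equal to q-th roots of unity. -/
open Complex Matrix BigOperators

/-!
A dephased matrix `K` satisfies `K i j = K i j * K 0 0 * conj (K i 0) * conj (K 0 j)`, so each
entry lies in the Haagerup set `Λ(K)`. Permutations only relabel the indices of a Haagerup
product, and unimodular row and column scalings cancel against their conjugates in it, so `Λ` is
an equivalence invariant: `Λ(K) = Λ(H) = Λ(B)`. Finally, every element of `Λ(B)` is a product of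
`q`-th roots of unity and their conjugates.
-/

open ComplexConjugate

lemma IsPermMatrix.exists_eq_toMatrix {n : ℕ} {P : Matrix (Fin n) (Fin n) ℂ}
    (hP : IsPermMatrix P) : ∃ σ : Equiv.Perm (Fin n), P = σ.toPEquiv.toMatrix := by
  obtain ⟨σ, hσ⟩ := hP
  refine ⟨σ.symm, Matrix.ext fun i j => ?_⟩
  simp [hσ, Equiv.eq_symm_apply, eq_comm]

lemma IsUnitaryDiag.eq_diagonal {n : ℕ} {D : Matrix (Fin n) (Fin n) ℂ} (hD : IsUnitaryDiag D) :
    D = diagonal D.diag :=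
  hD.1.diagonal_diag.symm

lemma HadEquiv.exists_entry_eq {n : ℕ} {H K : Matrix (Fin n) (Fin n) ℂ} (h : HadEquiv H K) :
    ∃ (σ τ : Equiv.Perm (Fin n)) (u v : Fin n → ℂ), (∀ i, ‖u i‖ = 1) ∧ (∀ j, ‖v j‖ = 1) ∧
      ∀ i j, K i j = u i * H (σ i) (τ j) * v j := by
  obtain ⟨P₁, P₂, D₁, D₂, hP₁, hP₂, hD₁, hD₂, rfl⟩ := h
  obtain ⟨σ, rfl⟩ := hP₁.exists_eq_toMatrix
  obtain ⟨τ, rfl⟩ := hP₂.exists_eq_toMatrix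
  refine ⟨σ, τ.symm, fun i => D₁ (σ i) (σ i), fun j => D₂ (τ.symm j) (τ.symm j),
    fun i => hD₁.2 _, fun j => hD₂.2 _, fun i j => ?_⟩
  rw [hD₁.eq_diagonal, hD₂.eq_diagonal, PEquiv.mul_toMatrix_toPEquiv, Matrix.mul_assoc,
    Matrix.mul_assoc, PEquiv.toMatrix_toPEquiv_mul]
  simp [diagonal_mul, mul_diagonal, mul_assoc]

lemma mul_conj_eq_one_of_norm_eq_one {z : ℂ} (hz : ‖z‖ = 1) : z * conj z = 1 := by
  rw [mul_conj', hz]; norm_num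

lemma haagerupSet_subset_of_entry_eq {n : ℕ} {H K : Matrix (Fin n) (Fin n) ℂ}
    (σ τ : Fin n → Fin n) {u v : Fin n → ℂ} (hu : ∀ i, ‖u i‖ = 1) (hv : ∀ j, ‖v j‖ = 1)
    (hK : ∀ i j, K i j = u i * H (σ i) (τ j) * v j) : HaagerupSet K ⊆ HaagerupSet H := by
  rintro _ ⟨i, j, k, l, rfl⟩
  refine ⟨σ i, τ j, σ k, τ l, ?_⟩
  simp only [hK, map_mul]
  calc _ = (u i * conj (u i)) * (u k * conj (u k)) * (v j * conj (v j)) * (v l * conj (v l)) *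
        (H (σ i) (τ j) * H (σ k) (τ l) * conj (H (σ i) (τ l)) * conj (H (σ k) (τ j))) := by
        ring
    _ = _ := by simp only [mul_conj_eq_one_of_norm_eq_one, hu, hv, one_mul]

lemma HadEquiv.haagerupSet_eq {n : ℕ} {H K : Matrix (Fin n) (Fin n) ℂ} (h : HadEquiv H K) :
    HaagerupSet K = HaagerupSet H := by
  obtain ⟨σ, τ, u, v, hu, hv, hK⟩ := h.exists_entry_eq
  refine (haagerupSet_subset_of_entry_eq σ τ hu hv hK).antisymm
    (haagerupSet_subset_of_entry_eq σ.symm τ.symm (u := fun i => conj (u (σ.symm i)))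
      (v := fun j => conj (v (τ.symm j))) (by simpa using fun i => hu _)
      (by simpa using fun j => hv _) fun i j => ?_)
  rw [hK, Equiv.apply_symm_apply, Equiv.apply_symm_apply]
  calc H i j = (u (σ.symm i) * conj (u (σ.symm i))) * (v (τ.symm j) * conj (v (τ.symm j))) *
        H i j := by
        rw [mul_conj_eq_one_of_norm_eq_one (hu _), mul_conj_eq_one_of_norm_eq_one (hv _)]; ring
    _ = _ := by ring

lemma mem_haagerupSet_of_row_col_eq_one {n : ℕ} {K : Matrix (Fin n) (Fin n) ℂ} {r c : Fin n}
    (hrow : ∀ j, K r j = 1) (hcol : ∀ i, K i c = 1) (i j : Fin n) : K i j ∈ HaagerupSet K :=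
  ⟨i, j, r, c, by simp [hrow, hcol]⟩

lemma pow_eq_one_of_mem_haagerupSet {n q : ℕ} {B : Matrix (Fin n) (Fin n) ℂ}
    (hB : ∀ i j, B i j ^ q = 1) {z : ℂ} (hz : z ∈ HaagerupSet B) : z ^ q = 1 := by
  obtain ⟨i, j, k, l, rfl⟩ := hz
  simp [mul_pow, ← map_pow, hB]

theorem dephased_entries_roots_of_unity_general {q n : ℕ} [NeZero n]
    (H : Matrix (Fin n) (Fin n) ℂ)
    (hBH : ∃ B : Matrix (Fin n) (Fin n) ℂ, IsCHadamard B ∧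
      (∀ i j, (B i j) ^ q = 1) ∧ HadEquiv H B)
    (K : Matrix (Fin n) (Fin n) ℂ) (hKeq : HadEquiv H K)
    (hKrow : ∀ j, K 0 j = 1) (hKcol : ∀ i, K i 0 = 1) :
    ∀ i j, (K i j) ^ q = 1 := by
  obtain ⟨B, -, hBq, hHB⟩ := hBH
  intro i j
  apply pow_eq_one_of_mem_haagerupSet hBq
  rw [hHB.haagerupSet_eq, ← hKeq.haagerupSet_eq]
  exact mem_haagerupSet_of_row_col_eq_one hKrow hKcol i j

theorem dephased_entries_roots_of_unity {q n : ℕ} [NeZero n]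
    (H : Matrix (Fin n) (Fin n) ℂ) (hH : IsCHadamard H)
    (hBH : ∃ B : Matrix (Fin n) (Fin n) ℂ, IsCHadamard B ∧
      (∀ i j, (B i j) ^ q = 1) ∧ HadEquiv H B)
    (K : Matrix (Fin n) (Fin n) ℂ) (hKeq : HadEquiv H K)
    (hKrow : ∀ j, K 0 j = 1) (hKcol : ∀ i, K i 0 = 1) :
    ∀ i j, (K i j) ^ q = 1 :=
  dephased_entries_roots_of_unity_general H hBH K hKeq hKrow hKcol
end

section
/- For every unimodular complex number c, the matrix D₆(c) with rows (1,1,1,1,1,1), (1,-1,i,-ic,-i,ic), (1,i,-1,ic,-i,-ic), (1,-i·conj(c), i·conj(c), -1, i, -i), (1,-i,-i,i,-1,i), (1, i·conj(c), -i·conj(c), -i, i, -1) is a complex Hadamard matrix of order 6. -/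
open Complex Matrix BigOperators

def D6 (c : ℂ) : Matrix (Fin 6) (Fin 6) ℂ :=
  !![1, 1, 1, 1, 1, 1;
     1, -1, Complex.I, -Complex.I * c, -Complex.I, Complex.I * c;
     1, Complex.I, -1, Complex.I * c, -Complex.I, -Complex.I * c;
     1, -Complex.I * starRingEnd ℂ c, Complex.I * starRingEnd ℂ c, -1, Complex.I, -Complex.I;
     1, -Complex.I, -Complex.I, Complex.I, -1, Complex.I;
     1, Complex.I * starRingEnd ℂ c, -Complex.I * starRingEnd ℂ c, -Complex.I, Complex.I, -1]
/-! Every entry of `D6 c` is `±1`, `±i`, `±i c` or `±i c̄`, hence unimodular. For a matrix with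
unimodular entries the diagonal of `H Hᴴ` is automatically `n`, and `H Hᴴ` is Hermitian, so it
remains to check that rows `i < k` are orthogonal: fifteen identities in `i` and `c`, `c̄` that hold
modulo `i² = -1` and `c̄ c = 1`. -/

open ComplexConjugate

lemma isCHadamard_of_orthogonal {n : ℕ} {H : Matrix (Fin n) (Fin n) ℂ}
    (hnorm : ∀ i j, ‖H i j‖ = 1)
    (horth : ∀ i k, i < k → ∑ j, H i j * conj (H k j) = 0) :
    IsCHadamard H := by
  refine ⟨hnorm, ?_⟩
  ext i k
  rw [mul_apply, Matrix.smul_apply, one_apply]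
  simp only [conjTranspose_apply, RCLike.star_def]
  rcases lt_trichotomy i k with h | rfl | h
  · simp [horth i k h, h.ne]
  · simp [Complex.mul_conj', hnorm]
  · rw [if_neg h.ne', smul_zero, ← conj_conj (∑ j, H i j * conj (H k j))]
    simp [horth k i h, mul_comm]

lemma conj_mul_self_of_norm_eq_one {c : ℂ} (hc : ‖c‖ = 1) : conj c * c = 1 := by
  rw [mul_comm, Complex.mul_conj', hc]
  simp

lemma norm_D6_apply {c : ℂ} (hc : ‖c‖ = 1) (i j : Fin 6) : ‖D6 c i j‖ = 1 := by
  fin_cases i <;> fin_cases j <;> simp [D6, hc]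

lemma D6_rows_orthogonal {c : ℂ} (hc : ‖c‖ = 1) (i k : Fin 6) (hik : i < k) :
    ∑ j, D6 c i j * conj (D6 c k j) = 0 := by
  have hcc := conj_mul_self_of_norm_eq_one hc
  fin_cases i <;> fin_cases k <;> simp only [Fin.lt_def] at hik <;>
    simp [D6, Fin.sum_univ_succ] <;> grind [I_sq]

theorem D6_isCHadamard (c : ℂ) (hc : ‖c‖ = 1) :
    IsCHadamard (D6 c) :=
  isCHadamard_of_orthogonal (norm_D6_apply hc) (D6_rows_orthogonal hc)
end
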